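/- Let a be a nonzero real number and b > 0. Then there exists a constant C > 0 such that for every x ∈ ℝ, the integral ∫₀^∞ s^{-1/2} exp(-(x - a s)²/(b s)) ds is at most C. -/

import Mathlib

/-!
Writing `c = a² / b` and `t = x / a`, the exponent is `-c (s - t)² / s`, so it suffices to bound
`∫₀^∞ s^{-1/2} exp (-c (s - t)² / s) ds` uniformly in `t`. If `t ≤ 0` then `(s - t)² / s ≥ s`, and
the integral is at most `∫₀^∞ s^{-1/2} e^{-cs} ds = √(π / c)`. If `t > 0`, the substitution
`u = (s - t) / √s` maps `(0, ∞)` increasingly onto `ℝ`, with `du = (s + t) / (2 s √s) ds`, which is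
at least `s^{-1/2} ds / 2`; hence the integral is at most `2 ∫ e^{-cu²} du = 2 √(π / c)`.
-/

open MeasureTheory Real Set

theorem setIntegral_mono_on_of_nonneg {α : Type*} [MeasurableSpace α] {μ : Measure α}
    {f g : α → ℝ} {s : Set α} (hs : MeasurableSet s) (hf : ∀ x ∈ s, 0 ≤ f x)
    (hg : IntegrableOn g s μ) (hfg : ∀ x ∈ s, f x ≤ g x) :
    ∫ x in s, f x ∂μ ≤ ∫ x in s, g x ∂μ :=
  integral_mono_of_nonneg ((ae_restrict_iff' hs).2 (ae_of_all _ hf)) hg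
    ((ae_restrict_iff' hs).2 (ae_of_all _ hfg))

lemma integral_rpow_neg_half_mul_exp_neg_mul {c : ℝ} (hc : 0 < c) :
    ∫ s in Ioi (0:ℝ), s ^ (-(1:ℝ)/2) * exp (-(c * s)) = √(π / c) := by
  rw [show (-(1:ℝ)/2) = 1 / 2 - 1 by norm_num, integral_rpow_mul_exp_neg_mul_Ioi one_half_pos hc,
    Gamma_one_half_eq, ← sqrt_eq_rpow, ← sqrt_mul (by positivity),
    one_div_mul_eq_div]

lemma integrableOn_rpow_neg_half_mul_exp_neg_mul {c : ℝ} (hc : 0 < c) :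
    IntegrableOn (fun s : ℝ => s ^ (-(1:ℝ)/2) * exp (-(c * s))) (Ioi 0) := by
  simpa using integrableOn_rpow_mul_exp_neg_mul_rpow (by norm_num : (-1:ℝ) < -(1:ℝ)/2) one_pos hc

section Substitution

variable {t : ℝ}

lemma hasDerivAt_sub_div_sqrt {s : ℝ} (hs : 0 < s) :
    HasDerivAt (fun s => (s - t) / √s) ((s + t) / (2 * s * √s)) s := by
  have hrt : 0 < √s := sqrt_pos.2 hs
  refine (((hasDerivAt_id' s).sub_const t).div (hasDerivAt_sqrt hs.ne') hrt.ne').congr_deriv ?_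
  field_simp
  rw [sq_sqrt hs.le]
  ring

lemma strictMonoOn_sub_div_sqrt (ht : 0 ≤ t) : StrictMonoOn (fun s => (s - t) / √s) (Ioi 0) := by
  intro s₁ (h₁ : 0 < s₁) s₂ (h₂ : 0 < s₂) h
  have hr₁ : 0 < √s₁ := sqrt_pos.2 h₁
  have hr : √s₁ < √s₂ := sqrt_lt_sqrt h₁.le h
  have hsplit : ∀ s, 0 < s → (s - t) / √s = √s - t / √s := fun s hs => by
    have := sqrt_pos.2 hs
    field_simp
    rw [sq_sqrt hs.le]
  simp only [hsplit _ h₁, hsplit _ h₂]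
  have := div_le_div_of_nonneg_left ht hr₁ hr.le
  linarith

lemma image_sub_div_sqrt_Ioi (ht : 0 < t) : (fun s => (s - t) / √s) '' Ioi 0 = univ := by
  refine eq_univ_of_forall fun u => ?_
  -- `s = r²` for the positive root `r = (u + d) / 2` of `r² - u r - t = 0`
  obtain ⟨d, hd0, hd⟩ : ∃ d, 0 ≤ d ∧ d ^ 2 = u ^ 2 + 4 * t :=
    ⟨_, sqrt_nonneg _, sq_sqrt (by positivity)⟩
  have hr : 0 < (u + d) / 2 := by nlinarith
  refine ⟨((u + d) / 2) ^ 2, pow_pos hr 2, ?_⟩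
  dsimp only
  rw [sqrt_sq hr.le, div_eq_iff hr.ne']
  nlinarith

lemma rpow_neg_half_le_two_mul_div (ht : 0 ≤ t) {s : ℝ} (hs : 0 < s) :
    s ^ (-(1:ℝ)/2) ≤ 2 * ((s + t) / (2 * s * √s)) := by
  rw [neg_div, rpow_neg hs.le, ← sqrt_eq_rpow]
  have := sqrt_pos.2 hs
  field_simp
  linarith

end Substitution

section TimeIntegral

variable {c t : ℝ}

lemma integral_rpow_neg_half_mul_exp_neg_mul_sq_sub_div_le_of_nonpos (hc : 0 < c) (ht : t ≤ 0) :
    ∫ s in Ioi (0:ℝ), s ^ (-(1:ℝ)/2) * exp (-c * (s - t) ^ 2 / s) ≤ √(π / c) := by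
  rw [← integral_rpow_neg_half_mul_exp_neg_mul hc]
  refine setIntegral_mono_on_of_nonneg measurableSet_Ioi (fun s (hs : 0 < s) => by positivity)
    (integrableOn_rpow_neg_half_mul_exp_neg_mul hc) fun s (hs : 0 < s) => ?_
  gcongr
  rw [div_le_iff₀ hs]
  -- `(s - t)² - s² = t (t - 2s) ≥ 0`
  nlinarith [mul_nonneg_of_nonpos_of_nonpos ht (show t - 2 * s ≤ 0 by linarith)]

lemma integral_rpow_neg_half_mul_exp_neg_mul_sq_sub_div_le_of_pos (hc : 0 < c) (ht : 0 < t) :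
    ∫ s in Ioi (0:ℝ), s ^ (-(1:ℝ)/2) * exp (-c * (s - t) ^ 2 / s) ≤ 2 * √(π / c) := by
  set φ := fun s : ℝ => (s - t) / √s
  set φ' := fun s : ℝ => (s + t) / (2 * s * √s)
  have hφ' : ∀ s ∈ Ioi (0:ℝ), HasDerivWithinAt φ (φ' s) (Ioi 0) s :=
    fun s hs => (hasDerivAt_sub_div_sqrt hs).hasDerivWithinAt
  have hφ : InjOn φ (Ioi 0) := (strictMonoOn_sub_div_sqrt ht.le).injOn
  have hint : IntegrableOn (fun s => |φ' s| • exp (-c * φ s ^ 2)) (Ioi 0) := by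
    rw [← integrableOn_image_iff_integrableOn_abs_deriv_smul measurableSet_Ioi hφ' hφ
      (fun u => exp (-c * u ^ 2)), image_sub_div_sqrt_Ioi ht]
    exact (integrable_exp_neg_mul_sq hc).integrableOn
  calc ∫ s in Ioi (0:ℝ), s ^ (-(1:ℝ)/2) * exp (-c * (s - t) ^ 2 / s)
      ≤ ∫ s in Ioi (0:ℝ), 2 * (|φ' s| • exp (-c * φ s ^ 2)) := by
        refine setIntegral_mono_on_of_nonneg measurableSet_Ioi (fun s (hs : 0 < s) => by positivity)
          (hint.const_mul 2) fun s (hs : 0 < s) => ?_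
        have hφs : φ s ^ 2 = (s - t) ^ 2 / s := by simp only [φ, div_pow, sq_sqrt hs.le]
        rw [smul_eq_mul, ← mul_assoc, hφs, mul_div_assoc, abs_of_pos (by positivity)]
        gcongr
        exact rpow_neg_half_le_two_mul_div ht.le hs
    _ = 2 * ∫ u, exp (-c * u ^ 2) := by
        rw [integral_const_mul, ← integral_image_eq_integral_abs_deriv_smul measurableSet_Ioi hφ' hφ
          (fun u => exp (-c * u ^ 2)), image_sub_div_sqrt_Ioi ht, setIntegral_univ]
    _ = 2 * √(π / c) := by rw [integral_gaussian]

lemma integral_rpow_neg_half_mul_exp_neg_mul_sq_sub_div_le (hc : 0 < c) (t : ℝ) :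
    ∫ s in Ioi (0:ℝ), s ^ (-(1:ℝ)/2) * exp (-c * (s - t) ^ 2 / s) ≤ 2 * √(π / c) := by
  rcases le_or_gt t 0 with ht | ht
  · have := integral_rpow_neg_half_mul_exp_neg_mul_sq_sub_div_le_of_nonpos hc ht
    linarith [sqrt_nonneg (π / c)]
  · exact integral_rpow_neg_half_mul_exp_neg_mul_sq_sub_div_le_of_pos hc ht

end TimeIntegral

theorem moving_gaussian_time_integral_bounded (a b : ℝ) (ha : a ≠ 0) (hb : 0 < b) :
    ∃ C : ℝ, 0 < C ∧ ∀ x : ℝ,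
      (∫ s in Ioi (0:ℝ), s ^ (-(1:ℝ)/2) * Real.exp (-(x - a * s)^2 / (b * s))) ≤ C := by
  have hc : 0 < a ^ 2 / b := by positivity
  refine ⟨2 * √(π / (a ^ 2 / b)), by positivity, fun x => ?_⟩
  calc ∫ s in Ioi (0:ℝ), s ^ (-(1:ℝ)/2) * exp (-(x - a * s) ^ 2 / (b * s))
      = ∫ s in Ioi (0:ℝ), s ^ (-(1:ℝ)/2) * exp (-(a ^ 2 / b) * (s - x / a) ^ 2 / s) :=
        setIntegral_congr_fun measurableSet_Ioi fun s (hs : 0 < s) => by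
          congr 2
          field_simp
          ring
    _ ≤ 2 * √(π / (a ^ 2 / b)) := integral_rpow_neg_half_mul_exp_neg_mul_sq_sub_div_le hc (x / a)
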